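/- arXiv:1803.03753 — 2 statements merged into one kernel-verified Lean document; each statement's English description precedes it below -/
import Mathlib

section
/- If there is an injective F_sigma-map from a Polish space X into ω × Y (for Y Polish), then there is also an injective Δ⁰₂-map from X into ω × Y. Here an F_sigma-map is a function such that images and preimages of F_sigma sets are F_sigma, and a Δ⁰₂-map is one such that images and preimages of sets that are both F_sigma and G_delta are again both F_sigma and G_delta. -/
/-- A set is F_sigma if it is a countable union of closed sets. -/
def IsFsigma {X : Type*} [TopologicalSpace X] (s : Set X) : Prop :=
  ∃ F : ℕ → Set X, (∀ n, IsClosed (F n)) ∧ s = ⋃ n, F n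

/-- A Δ⁰₂ set is one that is both F_sigma and G_delta. -/
def IsDelta02 {X : Type*} [TopologicalSpace X] (s : Set X) : Prop :=
  IsFsigma s ∧ IsGδ s

/-!
Write `range f = ⋃ n, F n` with `F n` closed and tag each point `z` of the range with the
least `n` such that `z ∈ F n`. The level sets of the tag are the Δ⁰₂ sets `disjointed F n`,
so `x ↦ (tag (f x), f x)` is still an injective F_sigma-map into `ℕ × (ℕ × Y)`, and now its
range `⋃ n, {n} ×ˢ disjointed F n` is G_δ. An injective F_sigma-map `g` with G_δ range is a
Δ⁰₂-map, because `(g '' B)ᶜ = g '' Bᶜ ∪ (range g)ᶜ`. Finally `ℕ × (ℕ × Y) ≃ₜ ℕ × Y`.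
-/

open Set Function

section Sets

variable {X Y : Type*} [TopologicalSpace X] [TopologicalSpace Y] {s t : Set X}

theorem isFsigma_iff_isGδ_compl : IsFsigma s ↔ IsGδ sᶜ := by
  rw [isGδ_iff_eq_iInter_nat]
  constructor
  · rintro ⟨F, hF, rfl⟩
    exact ⟨fun n => (F n)ᶜ, fun n => (hF n).isOpen_compl, compl_iUnion F⟩
  · rintro ⟨U, hU, hsU⟩
    refine ⟨fun n => (U n)ᶜ, fun n => (hU n).isClosed_compl, ?_⟩
    rw [← compl_iInter, ← hsU, compl_compl]

theorem isGδ_iff_isFsigma_compl : IsGδ s ↔ IsFsigma sᶜ := by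
  rw [isFsigma_iff_isGδ_compl, compl_compl]

theorem IsClosed.isFsigma (h : IsClosed s) : IsFsigma s :=
  isFsigma_iff_isGδ_compl.2 h.isOpen_compl.isGδ

theorem IsOpen.isFsigma [PerfectlyNormalSpace X] (h : IsOpen s) : IsFsigma s :=
  isFsigma_iff_isGδ_compl.2 h.isClosed_compl.isGδ

theorem IsFsigma.iUnion {ι : Sort*} [Countable ι] {s : ι → Set X} (h : ∀ i, IsFsigma (s i)) :
    IsFsigma (⋃ i, s i) := by
  rw [isFsigma_iff_isGδ_compl, compl_iUnion]
  exact .iInter fun i => isFsigma_iff_isGδ_compl.1 (h i)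

theorem IsFsigma.union (hs : IsFsigma s) (ht : IsFsigma t) : IsFsigma (s ∪ t) := by
  rw [isFsigma_iff_isGδ_compl, compl_union]
  exact (isFsigma_iff_isGδ_compl.1 hs).inter (isFsigma_iff_isGδ_compl.1 ht)

theorem IsFsigma.inter (hs : IsFsigma s) (ht : IsFsigma t) : IsFsigma (s ∩ t) := by
  rw [isFsigma_iff_isGδ_compl, compl_inter]
  exact (isFsigma_iff_isGδ_compl.1 hs).union (isFsigma_iff_isGδ_compl.1 ht)

theorem IsFsigma.preimage {f : X → Y} (hf : Continuous f) {s : Set Y} (hs : IsFsigma s) :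
    IsFsigma (f ⁻¹' s) := by
  rw [isFsigma_iff_isGδ_compl, ← preimage_compl]
  exact (isFsigma_iff_isGδ_compl.1 hs).preimage hf

theorem IsFsigma.prod {t : Set Y} (hs : IsFsigma s) (ht : IsFsigma t) : IsFsigma (s ×ˢ t) := by
  rw [prod_eq]
  exact (hs.preimage continuous_fst).inter (ht.preimage continuous_snd)

theorem IsDelta02.compl (hs : IsDelta02 s) : IsDelta02 sᶜ :=
  ⟨isGδ_iff_isFsigma_compl.1 hs.2, isFsigma_iff_isGδ_compl.1 hs.1⟩

theorem IsDelta02.inter (hs : IsDelta02 s) (ht : IsDelta02 t) : IsDelta02 (s ∩ t) :=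
  ⟨hs.1.inter ht.1, hs.2.inter ht.2⟩

theorem IsDelta02.preimage {f : X → Y} (hf : Continuous f) {s : Set Y} (hs : IsDelta02 s) :
    IsDelta02 (f ⁻¹' s) :=
  ⟨hs.1.preimage hf, hs.2.preimage hf⟩

variable [PerfectlyNormalSpace X]

theorem IsClosed.isDelta02 (h : IsClosed s) : IsDelta02 s := ⟨h.isFsigma, h.isGδ⟩

theorem IsOpen.isDelta02 (h : IsOpen s) : IsDelta02 s := ⟨h.isFsigma, h.isGδ⟩

end Sets

section Maps

variable {X Y Z : Type*} [TopologicalSpace X] [TopologicalSpace Y] [TopologicalSpace Z]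

def IsFsigmaMap (f : X → Y) : Prop :=
  (∀ A : Set Y, IsFsigma A → IsFsigma (f ⁻¹' A)) ∧
    ∀ B : Set X, IsFsigma B → IsFsigma (f '' B)

def IsDelta02Map (f : X → Y) : Prop :=
  (∀ A : Set Y, IsDelta02 A → IsDelta02 (f ⁻¹' A)) ∧
    ∀ B : Set X, IsDelta02 B → IsDelta02 (f '' B)

theorem IsDelta02Map.comp {g : Y → Z} {f : X → Y} (hg : IsDelta02Map g) (hf : IsDelta02Map f) :
    IsDelta02Map (g ∘ f) :=
  ⟨fun A hA => hf.1 _ (hg.1 A hA), fun B hB => image_comp g f B ▸ hg.2 _ (hf.2 B hB)⟩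

theorem Homeomorph.isDelta02Map (e : X ≃ₜ Y) : IsDelta02Map e :=
  ⟨fun _ hA => hA.preimage e.continuous,
    fun B hB => e.image_eq_preimage_symm B ▸ hB.preimage e.symm.continuous⟩

theorem IsFsigmaMap.isDelta02Map {f : X → Y} (hf : IsFsigmaMap f) (hinj : Injective f)
    (hrange : IsGδ (range f)) : IsDelta02Map f := by
  refine ⟨fun A hA => ⟨hf.1 A hA.1, ?_⟩, fun B hB => ⟨hf.2 B hB.1, ?_⟩⟩
  · rw [isGδ_iff_isFsigma_compl, ← preimage_compl]
    exact hf.1 _ hA.compl.1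
  · have : (f '' B)ᶜ = f '' Bᶜ ∪ (range f)ᶜ := by
      rw [image_compl_eq_range_sdiff_image hinj]
      ext y
      by_cases hy : y ∈ range f <;> simp_all
    rw [isGδ_iff_isFsigma_compl, this]
    exact (hf.2 _ hB.compl.1).union (isGδ_iff_isFsigma_compl.1 hrange)

end Maps

section FirstIndex

variable {Z : Type*} (F : ℕ → Set Z)

noncomputable def firstIndex (z : Z) : ℕ := sInf {n | z ∈ F n}

noncomputable def tagFirstIndex (z : Z) : ℕ × Z := (firstIndex F z, z)

theorem tagFirstIndex_injective : Injective (tagFirstIndex F) :=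
  fun _ _ h => congrArg Prod.snd h

variable {F}

theorem firstIndex_eq_of_mem_disjointed {z : Z} {n : ℕ} (h : z ∈ disjointed F n) :
    firstIndex F z = n := by
  rw [disjointed_eq_inter_compl] at h
  simp only [mem_inter_iff, mem_iInter, mem_compl_iff] at h
  exact le_antisymm (Nat.sInf_le h.1)
    (le_csInf ⟨n, h.1⟩ fun k hk => not_lt.1 fun hkn => h.2 k hkn hk)

theorem mk_mem_image_tagFirstIndex_iff {S : Set Z} (hS : S ⊆ ⋃ n, F n) {m : ℕ} {z : Z} :
    (m, z) ∈ tagFirstIndex F '' S ↔ z ∈ S ∩ disjointed F m := by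
  constructor
  · rintro ⟨z, hz, ⟨⟩⟩
    obtain ⟨n, hn⟩ := mem_iUnion.1 ((iUnion_disjointed (f := F)).symm ▸ hS hz)
    exact ⟨hz, firstIndex_eq_of_mem_disjointed hn ▸ hn⟩
  · rintro ⟨hz, hm⟩
    exact ⟨z, hz, by rw [tagFirstIndex, firstIndex_eq_of_mem_disjointed hm]⟩

theorem image_tagFirstIndex {S : Set Z} (hS : S ⊆ ⋃ n, F n) :
    tagFirstIndex F '' S = ⋃ n, {n} ×ˢ (S ∩ disjointed F n) := by
  ext ⟨m, z⟩
  simp [mk_mem_image_tagFirstIndex_iff hS]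

theorem compl_image_tagFirstIndex_iUnion :
    (tagFirstIndex F '' ⋃ n, F n)ᶜ = ⋃ n, {n} ×ˢ (disjointed F n)ᶜ := by
  ext ⟨m, z⟩
  have hD : disjointed F m ⊆ ⋃ n, F n := (disjointed_subset F m).trans (subset_iUnion F m)
  simp only [mem_compl_iff, mk_mem_image_tagFirstIndex_iff subset_rfl, mem_inter_iff, mem_iUnion,
    mem_prod, mem_singleton_iff]
  exact ⟨fun h => ⟨m, rfl, fun hm => h ⟨mem_iUnion.1 (hD hm), hm⟩⟩,
    fun ⟨_, rfl, hm⟩ h => hm h.2⟩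

theorem preimage_tagFirstIndex_inter_iUnion (A : Set (ℕ × Z)) :
    tagFirstIndex F ⁻¹' A ∩ ⋃ n, F n = ⋃ n, disjointed F n ∩ Prod.mk n ⁻¹' A := by
  rw [← iUnion_disjointed, inter_iUnion]
  refine iUnion_congr fun n => ?_
  ext z
  simp only [mem_inter_iff, mem_preimage, and_comm, and_congr_right_iff]
  intro hz
  rw [tagFirstIndex, firstIndex_eq_of_mem_disjointed hz]

theorem isDelta02_disjointed [TopologicalSpace Z] [PerfectlyNormalSpace Z]
    (hF : ∀ n, IsClosed (F n)) (n : ℕ) : IsDelta02 (disjointed F n) := by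
  rw [disjointed_eq_inter_compl]
  exact (hF n).isDelta02.inter
    ((finite_Iio n).isOpen_biInter fun k _ => (hF k).isOpen_compl).isDelta02

end FirstIndex

theorem IsFsigmaMap.exists_injective_isDelta02Map_prod {X Z : Type*} [TopologicalSpace X]
    [TopologicalSpace Z] [PerfectlyNormalSpace Z] {f : X → Z} (hf : IsFsigmaMap f)
    (hinj : Injective f) : ∃ g : X → ℕ × Z, Injective g ∧ IsDelta02Map g := by
  obtain ⟨F, hF, hrange⟩ : IsFsigma (range f) := image_univ ▸ hf.2 univ isClosed_univ.isFsigma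
  have hD := isDelta02_disjointed hF
  have hg_inj : Injective (tagFirstIndex F ∘ f) := (tagFirstIndex_injective F).comp hinj
  refine ⟨_, hg_inj, IsFsigmaMap.isDelta02Map ⟨fun A hA => ?_, fun B hB => ?_⟩ hg_inj ?_⟩
  · rw [preimage_comp, ← preimage_inter_range, hrange, preimage_tagFirstIndex_inter_iUnion]
    exact hf.1 _ (.iUnion fun n => (hD n).1.inter (hA.preimage (Continuous.prodMk_right n)))
  · rw [image_comp, image_tagFirstIndex (hrange ▸ image_subset_range f B)]
    exact .iUnion fun n => isClosed_singleton.isFsigma.prod ((hf.2 B hB).inter (hD n).1)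
  · rw [range_comp, hrange, isGδ_iff_isFsigma_compl, compl_image_tagFirstIndex_iUnion]
    exact .iUnion fun n => isClosed_singleton.isFsigma.prod (hD n).compl.1

theorem stmt0_general {X Y : Type*} [TopologicalSpace X]
    [TopologicalSpace Y] [PolishSpace Y]
    (f : X → ℕ × Y) (hinj : Function.Injective f)
    (hpre : ∀ A : Set (ℕ × Y), IsFsigma A → IsFsigma (f ⁻¹' A))
    (himg : ∀ B : Set X, IsFsigma B → IsFsigma (f '' B)) :
    ∃ g : X → ℕ × Y, Function.Injective g ∧
      (∀ A : Set (ℕ × Y), IsDelta02 A → IsDelta02 (g ⁻¹' A)) ∧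
      (∀ B : Set X, IsDelta02 B → IsDelta02 (g '' B)) := by
  obtain ⟨g, hg_inj, hg⟩ := IsFsigmaMap.exists_injective_isDelta02Map_prod ⟨hpre, himg⟩ hinj
  let e : ℕ × (ℕ × Y) ≃ₜ ℕ × Y := (Homeomorph.prodAssoc ℕ ℕ Y).symm.trans
    (Nat.pairEquiv.toHomeomorphOfDiscrete.prodCongr (Homeomorph.refl Y))
  have he : IsDelta02Map (e ∘ g) := e.isDelta02Map.comp hg
  exact ⟨e ∘ g, e.injective.comp hg_inj, he.1, he.2⟩

theorem stmt0 {X Y : Type*} [TopologicalSpace X] [PolishSpace X]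
    [TopologicalSpace Y] [PolishSpace Y]
    (f : X → ℕ × Y) (hinj : Function.Injective f)
    (hpre : ∀ A : Set (ℕ × Y), IsFsigma A → IsFsigma (f ⁻¹' A))
    (himg : ∀ B : Set X, IsFsigma B → IsFsigma (f '' B)) :
    ∃ g : X → ℕ × Y, Function.Injective g ∧
      (∀ A : Set (ℕ × Y), IsDelta02 A → IsDelta02 (g ⁻¹' A)) ∧
      (∀ B : Set X, IsDelta02 B → IsDelta02 (g '' B)) :=
  stmt0_general f hinj hpre himg
end

section
/- Let X be a topological space that is a countable union of closed subsets (Pᵢ)_{i∈ω} each of covering dimension at most n, where X is separable metrizable. Then dim(X) ≤ n. Consequently, for a separable metrizable space P that is a countable union of closed subsets each of dimension ≤ s for some fixed n, sup over the pieces of their dimensions equals dim(P). -/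
/-- Every finite open cover (by ambient open sets) of `s` has an open shrinking
whose traces on `s` have order at most `m` (every point of `s` lies in at most `m`
of the sets). -/
def ShrinkOrderLE {X : Type*} [TopologicalSpace X] (s : Set X) (m : ℕ) : Prop :=
  ∀ (k : ℕ) (U : Fin k → Set X), (∀ i, IsOpen (U i)) → s ⊆ ⋃ i, U i →
    ∃ V : Fin k → Set X, (∀ i, IsOpen (V i)) ∧ (∀ i, V i ∩ s ⊆ U i) ∧
      (s ⊆ ⋃ i, V i) ∧ ∀ x ∈ s, Set.ncard {i | x ∈ V i} ≤ m

/-- The (Lebesgue covering) topological dimension of the subspace `s` is at most `n`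
(with the convention that dimension `< 0` means `s` is empty). -/
def CovDimLE {X : Type*} [TopologicalSpace X] (s : Set X) (n : ℤ) : Prop :=
  if n < 0 then s = ∅ else ShrinkOrderLE s (n.toNat + 1)

open Set

/-- Step lemma: shrink a finite open cover (with closures) so that its order on a
closed set `P` of small dimension is at most `n+1`. -/
lemma step_lemma {X : Type*} [MetricSpace X] {k n : ℕ} {P : Set X} (hP : IsClosed P)
    (hdim : ShrinkOrderLE P (n + 1)) (A : Fin k → Set X) (hAo : ∀ i, IsOpen (A i))
    (hAc : ⋃ i, A i = univ) :
    ∃ B : Fin k → Set X, (∀ i, IsOpen (B i)) ∧ (⋃ i, B i = univ) ∧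
      (∀ i, closure (B i) ⊆ A i) ∧ ∀ x ∈ P, Set.ncard {i | x ∈ B i} ≤ n + 1 := by
  obtain ⟨A', hA'U, hA'o, hA'cl⟩ := exists_iUnion_eq_closure_subset hAo
    (fun x => Set.toFinite _) hAc
  obtain ⟨V, hVo, hVsub, hVcov, hVord⟩ := hdim k A' hA'o (hA'U ▸ subset_univ P)
  refine ⟨fun i => (V i ∩ A' i) ∪ (A' i \ P), ?_, ?_, ?_, ?_⟩
  · intro i
    exact ((hVo i).inter (hA'o i)).union ((hA'o i).sdiff hP)
  · apply eq_univ_of_forall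
    intro x
    by_cases hx : x ∈ P
    · obtain ⟨_, ⟨i, rfl⟩, hi⟩ := hVcov hx
      exact mem_iUnion.2 ⟨i, Or.inl ⟨hi, hVsub i ⟨hi, hx⟩⟩⟩
    · have : x ∈ ⋃ i, A' i := hA'U ▸ mem_univ x
      obtain ⟨_, ⟨i, rfl⟩, hi⟩ := this
      exact mem_iUnion.2 ⟨i, Or.inr ⟨hi, hx⟩⟩
  · intro i
    have hsub : (V i ∩ A' i) ∪ (A' i \ P) ⊆ A' i := by
      rintro x (⟨-, h⟩ | ⟨h, -⟩) <;> exact h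
    exact (closure_mono hsub).trans (hA'cl i)
  · intro x hx
    refine le_trans (Set.ncard_le_ncard ?_ (Set.toFinite _)) (hVord x hx)
    rintro i (⟨h, -⟩ | ⟨-, h⟩)
    · exact h
    · exact absurd hx h

/-- Countable closed sum theorem: a separable metrizable space that is a countable union
of closed subsets of covering dimension at most n has covering dimension at most n. -/
theorem stmt15 (X : Type*) [MetricSpace X] [TopologicalSpace.SeparableSpace X] (n : ℕ)
    (P : ℕ → Set X) (hcl : ∀ i, IsClosed (P i))
    (hdim : ∀ i, CovDimLE (P i) (n : ℤ)) (hcov : ⋃ i, P i = Set.univ) :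
    CovDimLE (Set.univ : Set X) (n : ℤ) := by
  classical
  have hn : ¬ ((n : ℤ) < 0) := by simp
  unfold CovDimLE at hdim ⊢
  simp only [if_neg hn, Int.toNat_natCast] at hdim ⊢
  intro k U hUo hUcov
  -- Build the sequence of shrinkings
  let T := {f : Fin k → Set X // (∀ i, IsOpen (f i)) ∧ ⋃ i, f i = univ}
  have step : ∀ (j : ℕ) (f : T), ∃ g : T,
      (∀ i, closure (g.1 i) ⊆ f.1 i) ∧ ∀ x ∈ P j, Set.ncard {i | x ∈ g.1 i} ≤ n + 1 := by
    intro j f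
    obtain ⟨B, hBo, hBc, hBcl, hBord⟩ := step_lemma (hcl j) (hdim j) f.1 f.2.1 f.2.2
    exact ⟨⟨B, hBo, hBc⟩, hBcl, hBord⟩
  let V : ℕ → T := fun j => Nat.rec ⟨U, hUo, univ_subset_iff.1 hUcov⟩
    (fun j f => Classical.choose (step j f)) j
  have hVcl : ∀ j i, closure ((V (j+1)).1 i) ⊆ (V j).1 i :=
    fun j => (Classical.choose_spec (step j (V j))).1
  have hVord : ∀ j, ∀ x ∈ P j, Set.ncard {i | x ∈ (V (j+1)).1 i} ≤ n + 1 :=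
    fun j => (Classical.choose_spec (step j (V j))).2
  have hVmono : ∀ j i, (V (j+1)).1 i ⊆ (V j).1 i :=
    fun j i => subset_closure.trans (hVcl j i)
  have hVchain : ∀ a b, a ≤ b → ∀ i, (V b).1 i ⊆ (V a).1 i := by
    intro a b hab i
    induction b with
    | zero => obtain rfl : a = 0 := Nat.le_zero.1 hab; exact subset_rfl
    | succ b ih =>
      rcases Nat.eq_or_lt_of_le hab with rfl | h
      · exact subset_rfl
      · exact (hVmono b i).trans (ih (by omega))
  -- the open "good" sets
  let G : ℕ → Set X := fun j => {x | Set.ncard {i | x ∈ closure ((V (j+2)).1 i)} ≤ n + 1}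
  have hGo : ∀ j, IsOpen (G j) := by
    intro j
    have : G j = ⋃ (t : Finset (Fin k)) (_ : t.card ≤ n + 1),
        ⋂ (i : Fin k) (_ : i ∉ t), (closure ((V (j+2)).1 i))ᶜ := by
      ext x
      simp only [mem_iUnion, mem_iInter, mem_compl_iff]
      constructor
      · intro hx
        refine ⟨{i | x ∈ closure ((V (j+2)).1 i)}.toFinset, ?_, ?_⟩
        · rwa [← Set.ncard_eq_toFinset_card']
        · intro i hi; simpa using hi
      · rintro ⟨t, ht, hsub⟩
        refine le_trans (Set.ncard_le_ncard ?_ t.finite_toSet) (by simpa using ht)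
        intro i hi
        by_contra hit
        exact hsub i hit hi
    rw [this]
    exact isOpen_iUnion fun t => isOpen_iUnion fun _ =>
      isOpen_iInter_of_finite fun i => isOpen_iInter_of_finite fun _ =>
        isClosed_closure.isOpen_compl
  -- order of V (j+1) on P m for m ≤ j
  have hVordle : ∀ m j, m ≤ j → ∀ x ∈ P m, Set.ncard {i | x ∈ (V (j+1)).1 i} ≤ n + 1 := by
    intro m j hmj x hx
    refine le_trans (Set.ncard_le_ncard ?_ (Set.toFinite _)) (hVord m x hx)
    exact fun i hi => hVchain (m+1) (j+1) (by omega) i hi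
  -- the final shrinking
  refine ⟨fun i => ⋃ j, ((V (j+2)).1 i ∩ G j), ?_, ?_, ?_, ?_⟩
  · exact fun i => isOpen_iUnion fun j => ((V (j+2)).2.1 i).inter (hGo j)
  · rintro i x ⟨hx, -⟩
    obtain ⟨_, ⟨j, rfl⟩, h, -⟩ := hx
    exact hVchain 0 (j+2) (by omega) i h
  · intro x _
    have : x ∈ ⋃ m, P m := hcov ▸ mem_univ x
    obtain ⟨_, ⟨m, rfl⟩, hm⟩ := this
    have hxG : x ∈ G m := by
      refine le_trans (Set.ncard_le_ncard ?_ (Set.toFinite _)) (hVord m x hm)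
      exact fun i hi => hVcl (m+1) i hi
    have : x ∈ ⋃ i, (V (m+2)).1 i := by rw [(V (m+2)).2.2]; trivial
    obtain ⟨_, ⟨i, rfl⟩, hi⟩ := this
    exact mem_iUnion.2 ⟨i, mem_iUnion.2 ⟨m, hi, hxG⟩⟩
  · intro x _
    by_cases hne : ∃ j, ∃ i, x ∈ (V (j+2)).1 i ∩ G j
    · obtain ⟨i0, -, hG0⟩ := Nat.find_spec hne
      refine le_trans (Set.ncard_le_ncard ?_ (Set.toFinite _)) hG0
      intro i hi
      obtain ⟨_, ⟨j, rfl⟩, hV, hG⟩ := hi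
      have hj : Nat.find hne ≤ j := Nat.find_min' hne ⟨i, hV, hG⟩
      exact subset_closure (hVchain (Nat.find hne + 2) (j+2) (by omega) i hV)
    · push_neg at hne
      have : {i | x ∈ ⋃ j, ((V (j+2)).1 i ∩ G j)} = ∅ := by
        ext i
        simp only [mem_setOf_eq, mem_iUnion, mem_empty_iff_false, iff_false, not_exists]
        exact fun j h => hne j i h
      rw [this, Set.ncard_empty]
      omega
end
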